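/- arXiv:2510.18432 — 5 statements merged into one kernel-verified Lean document; each statement's English description precedes it below -/
import Mathlib

section
/- Let K be a field of characteristic zero and let K⟨X_i | i ∈ ℕ⟩ denote the free associative unital K-algebra on generators X_i indexed by the natural numbers. Let D be the unique K-linear derivation of K⟨X_i | i ∈ ℕ⟩ with D(X_i) = X_{i+1} for all i. For each Q ∈ K⟨X_i | i ∈ ℕ⟩, let D_Q be the unique derivation of K⟨X_i | i ∈ ℕ⟩ sending X_i to D^i(Q) for every i ∈ ℕ, and define P ◁ Q := D_Q(P). Then ◁ is a right pre-Lie product: for all P, Q, R ∈ K⟨X_i | i ∈ ℕ⟩, (P ◁ Q) ◁ R − P ◁ (Q ◁ R) = (P ◁ R) ◁ Q − P ◁ (R ◁ Q). -/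
/-- A linear map satisfying the Leibniz rule that vanishes on generators is zero. -/
lemma deriv_ext_zero (K : Type*) [Field K]
    (f : FreeAlgebra K ℕ →ₗ[K] FreeAlgebra K ℕ)
    (hf : ∀ a b : FreeAlgebra K ℕ, f (a * b) = f a * b + a * f b)
    (h0 : ∀ i : ℕ, f (FreeAlgebra.ι K i) = 0) : ∀ x, f x = 0 := by
  have h1 : f 1 = 0 := by
    have h := hf 1 1
    rw [mul_one, mul_one, one_mul] at h
    exact (left_eq_add.mp h)
  intro x
  induction x using FreeAlgebra.induction with
  | grade0 c =>
      have : (algebraMap K (FreeAlgebra K ℕ)) c = c • (1 : FreeAlgebra K ℕ) := by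
        simp [Algebra.smul_def]
      rw [this, map_smul, h1, smul_zero]
  | grade1 i => exact h0 i
  | mul a b ha hb => rw [hf, ha, hb]; simp
  | add a b ha hb => rw [map_add, ha, hb]; simp

/-- On the free associative algebra `K⟨X_i | i ∈ ℕ⟩`, let `D` be the
derivation with `D(X_i) = X_{i+1}`, and for `Q` let `D_Q` be the derivation sending
`X_i` to `D^i(Q)`. Then `P ◁ Q := D_Q(P)` is a right pre-Lie product. -/
theorem preLie_NMI (K : Type*) [Field K] [CharZero K]
    (D : FreeAlgebra K ℕ →ₗ[K] FreeAlgebra K ℕ)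
    (hD_leibniz : ∀ a b : FreeAlgebra K ℕ, D (a * b) = D a * b + a * D b)
    (hD : ∀ i : ℕ, D (FreeAlgebra.ι K i) = FreeAlgebra.ι K (i + 1))
    (Dop : FreeAlgebra K ℕ → (FreeAlgebra K ℕ →ₗ[K] FreeAlgebra K ℕ))
    (hDop_leibniz : ∀ (Q : FreeAlgebra K ℕ) (a b : FreeAlgebra K ℕ),
      Dop Q (a * b) = Dop Q a * b + a * Dop Q b)
    (hDop : ∀ (Q : FreeAlgebra K ℕ) (i : ℕ),
      Dop Q (FreeAlgebra.ι K i) = (⇑D)^[i] Q) :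
    ∀ P Q R : FreeAlgebra K ℕ,
      Dop R (Dop Q P) - Dop (Dop R Q) P = Dop Q (Dop R P) - Dop (Dop Q R) P := by
  -- Step 1: Dop Q commutes with D.
  have hcomm : ∀ Q x, Dop Q (D x) = D (Dop Q x) := by
    intro Q
    have := deriv_ext_zero K ((Dop Q).comp D - D.comp (Dop Q))
      (by
        intro a b
        simp only [LinearMap.sub_apply, LinearMap.comp_apply, hD_leibniz, hDop_leibniz,
          map_add]
        noncomm_ring)
      (by
        intro i
        simp only [LinearMap.sub_apply, LinearMap.comp_apply, hD, hDop]
        rw [Function.iterate_succ_apply' D i Q]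
        simp)
    intro x
    have hx := this x
    simp only [LinearMap.sub_apply, LinearMap.comp_apply] at hx
    exact sub_eq_zero.mp hx
  -- Step 2: Dop Q commutes with iterates of D.
  have hcommIt : ∀ Q i x, Dop Q ((⇑D)^[i] x) = (⇑D)^[i] (Dop Q x) := by
    intro Q i
    induction i with
    | zero => intro x; simp
    | succ n ih =>
        intro x
        rw [Function.iterate_succ_apply' D n x, hcomm, ih,
          ← Function.iterate_succ_apply' D n (Dop Q x)]
  -- Step 3: the defect map is a derivation vanishing on generators.
  intro P Q R
  have key := deriv_ext_zero K
    ((Dop R).comp (Dop Q) - Dop (Dop R Q) - ((Dop Q).comp (Dop R) - Dop (Dop Q R)))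
    (by
      intro a b
      simp only [LinearMap.sub_apply, LinearMap.comp_apply, hDop_leibniz, map_add]
      noncomm_ring)
    (by
      intro i
      simp only [LinearMap.sub_apply, LinearMap.comp_apply, hDop]
      rw [hcommIt, hcommIt]
      simp)
    P
  simp only [LinearMap.sub_apply, LinearMap.comp_apply] at key
  linear_combination (norm := module) key
end

section
/- Let K be a field of characteristic zero and let K[x_i | i ∈ ℕ] be the commutative polynomial algebra in indeterminates x_i indexed by the natural numbers. Let D be the derivation D = Σ_{n≥0} x_{n+1} ∂/∂x_n (the unique derivation with D(x_n) = x_{n+1} for all n), and for each Q ∈ K[x_i | i ∈ ℕ] let D_Q be the derivation D_Q = Σ_{n≥0} D^n(Q) ∂/∂x_n (a finite sum when applied to any polynomial). Define P ◁ Q := D_Q(P). Then ◁ is a right pre-Lie product: for all P, Q, R ∈ K[x_i | i ∈ ℕ], (P ◁ Q) ◁ R − P ◁ (Q ◁ R) = (P ◁ R) ◁ Q − P ◁ (R ◁ Q). -/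
/-!
Both sides of the identity are values at `P` of derivations, and a derivation of `K[x_i | i ∈ ℕ]`
is determined by its values on the generators. Since `D_Q(x_n) = D^n Q` and `D(x_n) = x_{n+1}`, the
commutator `[D, D_Q]` kills every `x_n`, so `D` commutes with each `D_Q`. Hence
`[D_R, D_Q](x_n) = D_R(D^n Q) - D_Q(D^n R) = D^n(D_R Q - D_Q R)`, that is
`[D_R, D_Q] = D_{Q ◁ R} - D_{R ◁ Q}`, which is the pre-Lie identity.
-/

open MvPolynomial

namespace MvPolynomial

variable {k : Type*} [CommRing k]
  {D : Derivation k (MvPolynomial ℕ k) (MvPolynomial ℕ k)}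
  {Dop : MvPolynomial ℕ k → Derivation k (MvPolynomial ℕ k) (MvPolynomial ℕ k)}

theorem commute_derivation_of_apply_X (hD : ∀ n, D (X n) = X (n + 1))
    (hDop : ∀ Q n, Dop Q (X n) = (⇑D)^[n] Q) (Q : MvPolynomial ℕ k) :
    Function.Commute ⇑D ⇑(Dop Q) := by
  have hbracket : ⁅D, Dop Q⁆ = 0 := derivation_ext fun n => by
    rw [Derivation.commutator_apply, Derivation.zero_apply, hDop, hD, hDop,
      ← Function.iterate_succ_apply' (⇑D) n Q, sub_self]
  intro P
  rw [← sub_eq_zero, ← Derivation.commutator_apply, hbracket, Derivation.zero_apply]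

theorem commutator_eq_sub_of_apply_X (hD : ∀ n, D (X n) = X (n + 1))
    (hDop : ∀ Q n, Dop Q (X n) = (⇑D)^[n] Q) (Q S : MvPolynomial ℕ k) :
    ⁅Dop S, Dop Q⁆ = Dop (Dop S Q) - Dop (Dop Q S) := derivation_ext fun n => by
  have hcomm := commute_derivation_of_apply_X hD hDop
  rw [Derivation.commutator_apply, Derivation.sub_apply, hDop, hDop, hDop, hDop,
    ((hcomm S).iterate_left n).eq, ((hcomm Q).iterate_left n).eq]

end MvPolynomial

theorem preLie_coInv_NMI_general (K : Type*) [Field K]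
    (D : Derivation K (MvPolynomial ℕ K) (MvPolynomial ℕ K))
    (hD : ∀ n : ℕ, D (MvPolynomial.X n) = MvPolynomial.X (n + 1))
    (Dop : MvPolynomial ℕ K → Derivation K (MvPolynomial ℕ K) (MvPolynomial ℕ K))
    (hDop : ∀ (Q : MvPolynomial ℕ K) (n : ℕ),
      Dop Q (MvPolynomial.X n) = (⇑D)^[n] Q) :
    ∀ P Q R : MvPolynomial ℕ K,
      Dop R (Dop Q P) - Dop (Dop R Q) P = Dop Q (Dop R P) - Dop (Dop Q R) P := by
  intro P Q R
  have h := congrArg (· P) (commutator_eq_sub_of_apply_X hD hDop Q R)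
  simp only [Derivation.commutator_apply, Derivation.sub_apply] at h
  linear_combination h

/-- On the polynomial algebra `K[x_i | i ∈ ℕ]`, let `D` be the
derivation with `D(x_n) = x_{n+1}`, and for each polynomial `Q` let `D_Q` be the
derivation with `D_Q(x_n) = D^n(Q)`. Then `P ◁ Q := D_Q(P)` is a right pre-Lie
product. -/
theorem preLie_coInv_NMI (K : Type*) [Field K] [CharZero K]
    (D : Derivation K (MvPolynomial ℕ K) (MvPolynomial ℕ K))
    (hD : ∀ n : ℕ, D (MvPolynomial.X n) = MvPolynomial.X (n + 1))
    (Dop : MvPolynomial ℕ K → Derivation K (MvPolynomial ℕ K) (MvPolynomial ℕ K))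
    (hDop : ∀ (Q : MvPolynomial ℕ K) (n : ℕ),
      Dop Q (MvPolynomial.X n) = (⇑D)^[n] Q) :
    ∀ P Q R : MvPolynomial ℕ K,
      Dop R (Dop Q P) - Dop (Dop R Q) P = Dop Q (Dop R P) - Dop (Dop Q R) P :=
  preLie_coInv_NMI_general K D hD Dop hDop
end

section
/- Let n ≥ 1 and let k_1, …, k_n be natural numbers with k_1 + ⋯ + k_n ≤ n − 1. Then there exists a rooted forest on the vertex set {1, …, n} in which vertex i has exactly k_i children for every i; concretely, there exists a parent function p : {1,…,n} → {1,…,n} ∪ {root} such that the relation 'j is a child of i' (i.e. p(j) = i) is acyclic (equivalently, the ancestor relation generated by p is well-founded), and for every i the number of j with p(j) = i equals k_i. Moreover, if k_1 + ⋯ + k_n = n − 1, then any such forest is a tree: exactly one vertex j satisfies p(j) = root. -/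
/-!
Sorting the vertices of a forest by their parent shows that the number of roots plus the
total fertility is the number of vertices; with total fertility `n - 1` there is one root.
Existence goes by induction on `n`: if some `k x` is positive, build a forest on the other
vertices, which by the count has at least `k x` roots, and insert `x` as a new root adopting
`k x` of them. Acyclicity is tracked by a rank that strictly increases from parent to child.
-/

open Finset

theorem card_roots_add_sum_card_children {α : Type*} [Fintype α] [DecidableEq α]
    (p : α → Option α) :
    #{j | p j = none} + ∑ i, #{j | p j = some i} = Fintype.card α := by
  rw [← Fintype.sum_option fun o => #{j | p j = o}, ← card_univ]
  exact (card_eq_sum_card_fiberwise fun j _ => mem_univ (p j)).symm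

namespace Fin

variable {n : ℕ}

def adoptRoots (x : Fin (n + 1)) (p : Fin n → Option (Fin n)) (A : Finset (Fin n)) :
    Fin (n + 1) → Option (Fin (n + 1)) :=
  x.insertNth none fun j => if j ∈ A then some x else (p j).map x.succAbove

variable (x : Fin (n + 1)) (p : Fin n → Option (Fin n)) (A : Finset (Fin n))

@[simp]
theorem adoptRoots_self : adoptRoots x p A x = none := insertNth_apply_same _ _ _

@[simp]
theorem adoptRoots_succAbove (j : Fin n) :
    adoptRoots x p A (x.succAbove j) = if j ∈ A then some x else (p j).map x.succAbove :=
  insertNth_apply_succAbove _ _ _ _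

theorem card_children_adoptRoots (i : Fin (n + 1)) :
    #{j | adoptRoots x p A j = some i} = #{j | adoptRoots x p A (x.succAbove j) = some i} := by
  simp only [card_filter, sum_univ_succAbove _ x, adoptRoots_self, reduceCtorEq, if_false,
    zero_add]

theorem card_children_adoptRoots_self : #{j | adoptRoots x p A j = some x} = #A := by
  rw [card_children_adoptRoots]
  congr 1
  ext j
  by_cases hj : j ∈ A <;> simp [hj, succAbove_ne]

theorem card_children_adoptRoots_succAbove (hA : ∀ j ∈ A, p j = none) (i : Fin n) :
    #{j | adoptRoots x p A j = some (x.succAbove i)} = #{j | p j = some i} := by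
  rw [card_children_adoptRoots]
  congr 1
  ext j
  by_cases hj : j ∈ A <;> simp [hj, hA, ne_succAbove]

theorem exists_rank_adoptRoots {r : Fin n → ℕ} (hr : ∀ i j, p j = some i → r i < r j) :
    ∃ r' : Fin (n + 1) → ℕ, ∀ i j, adoptRoots x p A j = some i → r' i < r' j := by
  refine ⟨x.insertNth 0 (r · + 1), fun i j h => ?_⟩
  induction j using x.succAboveCases with
  | x => simp at h
  | p j =>
    by_cases hj : j ∈ A
    · simp_all
    · obtain ⟨i, rfl, hi⟩ : ∃ i', x.succAbove i' = i ∧ p j = some i' := by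
        simpa [hj, and_comm] using h
      simpa using hr _ _ hi

end Fin

theorem exists_ranked_forest_fin (n : ℕ) (k : Fin n → ℕ) (hk : ∑ i, k i < n) :
    ∃ (p : Fin n → Option (Fin n)) (r : Fin n → ℕ),
      (∀ i j, p j = some i → r i < r j) ∧ ∀ i, #{j | p j = some i} = k i := by
  induction n with
  | zero => simp at hk
  | succ n ih =>
    by_cases hk0 : ∀ i, k i = 0
    · exact ⟨fun _ => none, 0, by simp, by simp [hk0]⟩
    obtain ⟨x, hx⟩ := not_forall.mp hk0
    have hsplit := Fin.sum_univ_succAbove k x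
    obtain ⟨p, r, hr, hp⟩ := ih (k ∘ x.succAbove) (by simp only [Function.comp_apply]; omega)
    have hroots : k x ≤ #{j | p j = none} := by
      have hcount := card_roots_add_sum_card_children p
      simp only [hp, Function.comp_apply, Fintype.card_fin] at hcount
      omega
    obtain ⟨A, hA, hAcard⟩ := exists_subset_card_eq hroots
    obtain ⟨r', hr'⟩ := Fin.exists_rank_adoptRoots x p A hr
    refine ⟨Fin.adoptRoots x p A, r', hr', fun i => ?_⟩
    induction i using x.succAboveCases with
    | x => rw [Fin.card_children_adoptRoots_self, hAcard]
    | p i =>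
      rw [Fin.card_children_adoptRoots_succAbove x p A (fun j hj => by simpa using hA hj), hp]
      rfl

/-- If `k_1 + ⋯ + k_n ≤ n - 1`, there is a rooted forest on `{1,…,n}`
in which vertex `i` has exactly `k_i` children (given by an acyclic parent
function); moreover, if `k_1 + ⋯ + k_n = n - 1`, any such forest is a tree,
i.e. has exactly one root. -/
theorem forest_with_prescribed_fertilities (n : ℕ) (hn : 1 ≤ n)
    (k : Fin n → ℕ) (hk : ∑ i, k i ≤ n - 1) :
    (∃ p : Fin n → Option (Fin n),
      WellFounded (fun i j : Fin n => p j = some i) ∧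
      ∀ i : Fin n, (Finset.univ.filter fun j => p j = some i).card = k i) ∧
    (∑ i, k i = n - 1 →
      ∀ p : Fin n → Option (Fin n),
        WellFounded (fun i j : Fin n => p j = some i) →
        (∀ i : Fin n, (Finset.univ.filter fun j => p j = some i).card = k i) →
        (Finset.univ.filter fun j => p j = none).card = 1) := by
  constructor
  · obtain ⟨p, r, hr, hp⟩ := exists_ranked_forest_fin n k (by omega)
    exact ⟨p, Subrelation.wf (hr _ _) (measure r).wf, hp⟩
  · intro hsum p _ hp
    have hcount := card_roots_add_sum_card_children p
    simp only [hp, hsum, Fintype.card_fin] at hcount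
    omega
end

section
/- Let K be a field of characteristic zero and consider the ring K[[X_i | i ∈ ℕ]] of formal power series in countably many commuting variables X_i (multivariate power series indexed by finitely supported exponent functions α : ℕ → ℕ). Then there exists a unique U ∈ K[[X_i | i ∈ ℕ]] with zero constant coefficient satisfying the fixed-point equation U = − Σ_{i=0}^{∞} (X_i/i!) U^i; precisely, the constant coefficient of U is 0 and, for every nonzero finitely supported α : ℕ → ℕ, the coefficient of X^α in U equals − Σ_{i ∈ supp(α)} (1/i!) times the coefficient of X^{α − e_i} in U^i, where e_i is the exponent function of the single variable X_i (this sum is finite, so the equation is well posed). -/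
open MvPowerSeries Finsupp

lemma fp_degree_add (a b : ℕ →₀ ℕ) : (a + b).degree = a.degree + b.degree := by
  simp only [Finsupp.degree_eq_weight_one, map_add]

lemma fp_degree_single (i : ℕ) : (Finsupp.single i 1 : ℕ →₀ ℕ).degree = 1 := by
  classical
  exact Finsupp.degree_single i 1

/-- Coefficients of `U^i` at `β` depend only on coefficients of `U` of degree `≤ β.degree`. -/
lemma fp_coeff_pow_congr {K : Type*} [Field K] (U V : MvPowerSeries ℕ K) (i : ℕ)
    (β : ℕ →₀ ℕ) (h : ∀ γ : ℕ →₀ ℕ, γ.degree ≤ β.degree →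
      MvPowerSeries.coeff γ U = MvPowerSeries.coeff γ V) :
    MvPowerSeries.coeff β (U ^ i) = MvPowerSeries.coeff β (V ^ i) := by
  classical
  induction i generalizing β with
  | zero => simp
  | succ n ih =>
    rw [pow_succ, pow_succ, MvPowerSeries.coeff_mul, MvPowerSeries.coeff_mul]
    refine Finset.sum_congr rfl ?_
    rintro ⟨p, q⟩ hpq
    rw [Finset.HasAntidiagonal.mem_antidiagonal] at hpq
    have hd : p.degree + q.degree = β.degree := by rw [← fp_degree_add, hpq]
    have hp : p.degree ≤ β.degree := by omega
    have hq : q.degree ≤ β.degree := by omega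
    rw [ih p (fun γ hγ => h γ (le_trans hγ hp)), h q hq]

/-- Truncation of a partially-defined coefficient function to a power series. -/
noncomputable def fpTrunc (K : Type*) [Field K] (n : ℕ)
    (f : ∀ β : ℕ →₀ ℕ, β.degree < n → K) : MvPowerSeries ℕ K :=
  fun β => if h : β.degree < n then f β h else 0

/-- The coefficient function of the fixed point, defined by strong recursion on degree. -/
noncomputable def fpU (K : Type*) [Field K] : (ℕ →₀ ℕ) → K
  | α => - ∑ i ∈ α.support,
      ((Nat.factorial i : K)⁻¹ *
        MvPowerSeries.coeff (α - Finsupp.single i 1)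
          ((fpTrunc K α.degree (fun β _ => fpU K β)) ^ i))
  termination_by α => α.degree

/-- `fpU` bundled as a power series. -/
noncomputable def fpUS (K : Type*) [Field K] : MvPowerSeries ℕ K := fun α => fpU K α

lemma coeff_fpUS (K : Type*) [Field K] (α : ℕ →₀ ℕ) :
    MvPowerSeries.coeff α (fpUS K) = fpU K α := rfl

lemma coeff_fpTrunc (K : Type*) [Field K] (n : ℕ) (f : ∀ β : ℕ →₀ ℕ, β.degree < n → K)
    (β : ℕ →₀ ℕ) (h : β.degree < n) :
    MvPowerSeries.coeff β (fpTrunc K n f) = f β h := by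
  simp only [MvPowerSeries.coeff_apply, fpTrunc, dif_pos h]

lemma fpU_sub_degree_lt {α : ℕ →₀ ℕ} {i : ℕ} (hi : i ∈ α.support) :
    (α - Finsupp.single i 1).degree < α.degree := by
  classical
  have hle : Finsupp.single i 1 ≤ α := by
    rw [Finsupp.single_le_iff]
    exact Finsupp.mem_support_iff.mp hi |>.bot_lt
  have : (α - Finsupp.single i 1) + Finsupp.single i 1 = α := tsub_add_cancel_of_le hle
  have := congrArg Finsupp.degree this
  rw [fp_degree_add, fp_degree_single] at this
  omega

/-- `fpU` satisfies the fixed-point recursion with the genuine (untruncated) powers. -/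
lemma fpU_spec (K : Type*) [Field K] (α : ℕ →₀ ℕ) :
    MvPowerSeries.coeff α (fpUS K) = - ∑ i ∈ α.support,
      ((Nat.factorial i : K)⁻¹ *
        MvPowerSeries.coeff (α - Finsupp.single i 1) (fpUS K ^ i)) := by
  rw [coeff_fpUS, fpU]
  congr 1
  refine Finset.sum_congr rfl fun i hi => ?_
  congr 1
  refine fp_coeff_pow_congr _ _ i _ fun γ hγ => ?_
  have hlt : γ.degree < α.degree := lt_of_le_of_lt hγ (fpU_sub_degree_lt hi)
  rw [coeff_fpTrunc K α.degree _ γ hlt, coeff_fpUS]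

/-- In `K[[X_i | i ∈ ℕ]]`, there is a unique power series `U` with
zero constant coefficient satisfying `U = - Σ_{i≥0} (X_i / i!) Uⁱ`, expressed
coefficientwise: for every nonzero finitely supported `α`, the coefficient of
`X^α` in `U` is `- Σ_{i ∈ supp α} (1/i!) ·` (coefficient of `X^{α - e_i}` in `Uⁱ`). -/
theorem fixed_point_mu (K : Type*) [Field K] [CharZero K] :
    ∃! U : MvPowerSeries ℕ K,
      MvPowerSeries.coeff (0 : ℕ →₀ ℕ) U = 0 ∧
      ∀ α : ℕ →₀ ℕ, α ≠ 0 →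
        MvPowerSeries.coeff α U
          = - ∑ i ∈ α.support,
              ((Nat.factorial i : K)⁻¹ *
                MvPowerSeries.coeff (α - Finsupp.single i 1) (U ^ i)) := by
  refine ⟨fpUS K, ⟨?_, fun α _ => fpU_spec K α⟩, ?_⟩
  · have := fpU_spec K 0
    simpa using this
  · rintro V ⟨hV0, hV⟩
    -- show V = fpU by strong induction on degree
    have key : ∀ n : ℕ, ∀ α : ℕ →₀ ℕ, α.degree ≤ n →
        MvPowerSeries.coeff α V = MvPowerSeries.coeff α (fpUS K) := by
      intro n
      induction n with
      | zero =>
        intro α hα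
        have : α = 0 := by
          rw [← Finsupp.degree_eq_zero_iff]; omega
        subst this
        rw [hV0]
        have := fpU_spec K 0
        simp only [MvPowerSeries.coeff_apply] at *
        simpa using this.symm
      | succ n ih =>
        intro α hα
        rcases eq_or_ne α 0 with rfl | hne
        · rw [hV0]
          have := fpU_spec K 0
          simp only [MvPowerSeries.coeff_apply] at *
          simpa using this.symm
        · rw [hV α hne, fpU_spec K α]
          congr 1
          refine Finset.sum_congr rfl fun i hi => ?_
          congr 1
          refine fp_coeff_pow_congr _ _ i _ fun γ hγ => ?_
          have : γ.degree < α.degree := lt_of_le_of_lt hγ (fpU_sub_degree_lt hi)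
          exact ih γ (by omega)
    ext α
    exact key α.degree α le_rfl
end

section
/- Let K be a field of characteristic zero, and let L : K[X] → K[X] be the K-linear summation operator determined by L(P)(n) = Σ_{i=0}^{n−1} P(i) for every P ∈ K[X] and every natural number n. Consider the ring (K[X])[[X_i | i ∈ ℕ]] of formal power series in countably many commuting variables X_i with coefficients in the polynomial ring K[X]. Then there exists a unique 𝒫 ∈ (K[X])[[X_i | i ∈ ℕ]] with zero constant coefficient satisfying the fixed-point equation 𝒫 = L(Σ_{i=0}^{∞} (X_i/i!) 𝒫^i), where L is applied coefficientwise; precisely, the constant coefficient of 𝒫 is 0 and, for every nonzero finitely supported α : ℕ → ℕ, the coefficient of X^α in 𝒫 equals L applied to Σ_{i ∈ supp(α)} (1/i!) times the coefficient of X^{α − e_i} in 𝒫^i, where e_i is the exponent function of the single variable X_i (this sum is finite, so the equation is well posed). -/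
open MvPowerSeries

namespace FPFI

variable {K : Type*} [Field K]

/-- degree additivity -/
lemma degree_add (a b : ℕ →₀ ℕ) : Finsupp.degree (a + b) = Finsupp.degree a + Finsupp.degree b := by
  simp only [Finsupp.degree_eq_weight_one, map_add]

lemma degree_mono {a b : ℕ →₀ ℕ} (h : a ≤ b) : Finsupp.degree a ≤ Finsupp.degree b := by
  obtain ⟨c, rfl⟩ := le_iff_exists_add.mp h
  simp [degree_add]

lemma degree_sub_single_lt {α : ℕ →₀ ℕ} {i : ℕ} (hi : i ∈ α.support) :
    Finsupp.degree (α - Finsupp.single i 1) < Finsupp.degree α := by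
  have h1 : Finsupp.single i 1 ≤ α := by
    intro j
    by_cases hj : j = i
    · subst hj; simpa [Finsupp.single_apply, Nat.one_le_iff_ne_zero] using Finsupp.mem_support_iff.mp hi
    · simp [Finsupp.single_apply, Ne.symm hj]
  have : (α - Finsupp.single i 1) + Finsupp.single i 1 = α := tsub_add_cancel_of_le h1
  have h2 := congrArg Finsupp.degree this
  rw [degree_add] at h2
  have : Finsupp.degree (Finsupp.single i 1) = 1 := by
    simp [Finsupp.degree_single]
  omega

/-- coefficient of a power depends only on smaller coefficients -/
lemma coeff_pow_congr {Q Q' : MvPowerSeries ℕ (Polynomial K)} {n : ℕ}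
    (h : ∀ β : ℕ →₀ ℕ, Finsupp.degree β ≤ n →
      MvPowerSeries.coeff (R := Polynomial K) β Q = MvPowerSeries.coeff (R := Polynomial K) β Q')
    (i : ℕ) {γ : ℕ →₀ ℕ} (hγ : Finsupp.degree γ ≤ n) :
    MvPowerSeries.coeff (R := Polynomial K) γ (Q ^ i) = MvPowerSeries.coeff (R := Polynomial K) γ (Q' ^ i) := by
  induction i generalizing γ with
  | zero => simp
  | succ i ih =>
    rw [pow_succ, pow_succ, MvPowerSeries.coeff_mul, MvPowerSeries.coeff_mul]
    refine Finset.sum_congr rfl ?_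
    rintro ⟨a, b⟩ hab
    have hab' : a + b = γ := Finset.HasAntidiagonal.mem_antidiagonal.mp hab
    have ha : Finsupp.degree a ≤ n := le_trans (degree_mono (by rw [← hab']; exact le_add_right le_rfl)) hγ
    have hb : Finsupp.degree b ≤ n := le_trans (degree_mono (by rw [← hab']; exact le_add_left le_rfl)) hγ
    rw [ih ha, h b hb]

variable (L : Polynomial K →ₗ[K] Polynomial K)

/-- the fixed-point operator -/
noncomputable def Phi (Q : MvPowerSeries ℕ (Polynomial K)) : MvPowerSeries ℕ (Polynomial K) :=
  fun α => if α = 0 then 0 else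
    L (∑ i ∈ α.support,
        (Nat.factorial i : K)⁻¹ •
          MvPowerSeries.coeff (R := Polynomial K) (α - Finsupp.single i 1) (Q ^ i))

lemma coeff_Phi (Q : MvPowerSeries ℕ (Polynomial K)) (α : ℕ →₀ ℕ) :
    MvPowerSeries.coeff (R := Polynomial K) α (Phi L Q) = if α = 0 then 0 else
    L (∑ i ∈ α.support,
        (Nat.factorial i : K)⁻¹ •
          MvPowerSeries.coeff (R := Polynomial K) (α - Finsupp.single i 1) (Q ^ i)) := rfl

lemma Phi_congr {Q Q' : MvPowerSeries ℕ (Polynomial K)} {α : ℕ →₀ ℕ}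
    (h : ∀ β : ℕ →₀ ℕ, Finsupp.degree β < Finsupp.degree α →
      MvPowerSeries.coeff (R := Polynomial K) β Q = MvPowerSeries.coeff (R := Polynomial K) β Q') :
    MvPowerSeries.coeff (R := Polynomial K) α (Phi L Q)
      = MvPowerSeries.coeff (R := Polynomial K) α (Phi L Q') := by
  rw [coeff_Phi, coeff_Phi]
  by_cases hα : α = 0
  · simp [hα]
  simp only [hα, if_false]
  congr 1
  refine Finset.sum_congr rfl fun i hi => ?_
  congr 1
  exact coeff_pow_congr (n := Finsupp.degree (α - Finsupp.single i 1))
    (fun β hβ => h β (lt_of_le_of_lt hβ (degree_sub_single_lt hi))) i le_rfl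

/-- iterates of Phi -/
noncomputable def g (d : ℕ) : MvPowerSeries ℕ (Polynomial K) := (Phi L)^[d] 0

lemma g_succ (d : ℕ) : g L (d + 1) = Phi L (g L d) := Function.iterate_succ_apply' _ _ _

lemma g_step (d : ℕ) : ∀ α : ℕ →₀ ℕ, Finsupp.degree α ≤ d →
    MvPowerSeries.coeff (R := Polynomial K) α (g L d) = MvPowerSeries.coeff (R := Polynomial K) α (g L (d+1)) := by
  induction d with
  | zero =>
    intro α hα
    have : α = 0 := (Finsupp.degree_eq_zero_iff α).mp (Nat.le_zero.mp hα)
    subst this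
    simp [g, g_succ, coeff_Phi]
  | succ d ih =>
    intro α hα
    rw [g_succ, g_succ]
    exact Phi_congr L fun β hβ => ih β (by omega)

lemma g_stab {d e : ℕ} (hde : d ≤ e) : ∀ α : ℕ →₀ ℕ, Finsupp.degree α ≤ d →
    MvPowerSeries.coeff (R := Polynomial K) α (g L d) = MvPowerSeries.coeff (R := Polynomial K) α (g L e) := by
  induction e with
  | zero => intro α hα; cases Nat.le_zero.mp hde; rfl
  | succ e ih =>
    intro α hα
    rcases Nat.lt_or_ge d (e+1) with h | h
    · have hde' : d ≤ e := by omega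
      rw [ih hde' α hα]
      exact g_step L e α (by omega)
    · cases le_antisymm hde h; rfl

/-- The fixed point -/
noncomputable def Pfix : MvPowerSeries ℕ (Polynomial K) :=
  fun α => MvPowerSeries.coeff (R := Polynomial K) α (g L (Finsupp.degree α + 1))

lemma coeff_Pfix (α : ℕ →₀ ℕ) :
    MvPowerSeries.coeff (R := Polynomial K) α (Pfix L)
      = MvPowerSeries.coeff (R := Polynomial K) α (g L (Finsupp.degree α + 1)) := rfl

lemma Pfix_eq_g {d : ℕ} {α : ℕ →₀ ℕ} (h : Finsupp.degree α < d) :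
    MvPowerSeries.coeff (R := Polynomial K) α (Pfix L)
      = MvPowerSeries.coeff (R := Polynomial K) α (g L d) := by
  rw [coeff_Pfix]
  exact g_stab L (by omega) α (by omega)

lemma Pfix_spec (α : ℕ →₀ ℕ) :
    MvPowerSeries.coeff (R := Polynomial K) α (Pfix L)
      = MvPowerSeries.coeff (R := Polynomial K) α (Phi L (Pfix L)) := by
  rw [coeff_Pfix, g_succ]
  exact Phi_congr L fun β hβ => (Pfix_eq_g L hβ).symm

end FPFI

/-- With `L : K[X] → K[X]` the summation operator
(`L(P)(n) = P(0) + ⋯ + P(n-1)`), there is a unique power series `𝒫` in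
`(K[X])[[X_i | i ∈ ℕ]]` with zero constant coefficient satisfying
`𝒫 = L(Σ_{i≥0} (X_i / i!) 𝒫ⁱ)` (with `L` applied coefficientwise), expressed
coefficientwise: for every nonzero finitely supported `α`, the coefficient of
`X^α` in `𝒫` is `L` applied to `Σ_{i ∈ supp α} (1/i!) ·` (coefficient of
`X^{α - e_i}` in `𝒫ⁱ`). -/
theorem fixed_point_fundamental_invariant (K : Type*) [Field K] [CharZero K]
    (L : Polynomial K →ₗ[K] Polynomial K)
    (hL : ∀ (P : Polynomial K) (n : ℕ),
      (L P).eval (n : K) = ∑ i ∈ Finset.range n, P.eval (i : K)) :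
    ∃! P : MvPowerSeries ℕ (Polynomial K),
      MvPowerSeries.coeff (R := Polynomial K) (0 : ℕ →₀ ℕ) P = 0 ∧
      ∀ α : ℕ →₀ ℕ, α ≠ 0 →
        MvPowerSeries.coeff (R := Polynomial K) α P
          = L (∑ i ∈ α.support,
              (Nat.factorial i : K)⁻¹ •
                MvPowerSeries.coeff (R := Polynomial K) (α - Finsupp.single i 1) (P ^ i)) := by
  refine ⟨FPFI.Pfix L, ⟨?_, ?_⟩, ?_⟩
  · rw [FPFI.Pfix_spec L 0, FPFI.coeff_Phi]; simp
  · intro α hα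
    rw [FPFI.Pfix_spec L α, FPFI.coeff_Phi]
    simp [hα]
  · rintro P ⟨h0, hrec⟩
    apply MvPowerSeries.ext
    intro α
    -- strong induction on degree
    suffices H : ∀ d : ℕ, ∀ α : ℕ →₀ ℕ, Finsupp.degree α ≤ d →
        MvPowerSeries.coeff (R := Polynomial K) α P = MvPowerSeries.coeff (R := Polynomial K) α (FPFI.Pfix L) by
      exact H (Finsupp.degree α) α le_rfl
    intro d
    induction d with
    | zero =>
      intro α hα
      have : α = 0 := (Finsupp.degree_eq_zero_iff α).mp (Nat.le_zero.mp hα)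
      subst this
      rw [h0, FPFI.Pfix_spec L 0, FPFI.coeff_Phi]; simp
    | succ d ih =>
      intro α hα
      by_cases h : α = 0
      · subst h; rw [h0, FPFI.Pfix_spec L 0, FPFI.coeff_Phi]; simp
      · have hP : MvPowerSeries.coeff (R := Polynomial K) α P
            = MvPowerSeries.coeff (R := Polynomial K) α (FPFI.Phi L P) := by
          rw [hrec α h, FPFI.coeff_Phi]; simp [h]
        rw [hP, FPFI.Pfix_spec L α]
        exact FPFI.Phi_congr L fun β hβ => ih β (by omega)
end
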